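/- Let r ≥ 2 and let u, w ∈ S_r. Then u•δ − w•δ ∈ (r−1)Q_r if and only if u = w or u = w∘τ, where τ ∈ S_r is the transposition swapping 1 and r. Moreover, if u = w∘τ then u•δ − w•δ = −(r−1)·(w•θ), where θ = ε_1 − ε_r is the highest root. -/

import Mathlib

/-! Since `δ i - δ j = j - i` (0-indexed), the coordinate of `u • δ - w • δ` at `w j` is
`j - σ j` with `σ = u⁻¹ * w`. This integer lies in `[-(r-1), r-1]`, so it is divisible by `r - 1`
only if `σ j = j` or `{j, σ j} = {0, r - 1}`; hence `σ` is `1` or `τ = (0 r-1)`. Conversely `τ`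
exchanges the two extreme coordinates `±(r-1)/2` of `δ`, so `τ • δ - δ = -(r - 1) θ`, and the
general case follows by applying `w`. -/

open Finset

noncomputable section

/-- Inner product `⟨u,v⟩ = Σ_i u i * v i` on `ℚ^r`. -/
def ip {r : ℕ} (u v : Fin r → ℚ) : ℚ := ∑ i, u i * v i

/-- Action of `S_r` permuting coordinates: `(w • v) i = v (w⁻¹ i)`. -/
def pact {r : ℕ} (w : Equiv.Perm (Fin r)) (v : Fin r → ℚ) : Fin r → ℚ := fun i => v (w⁻¹ i)

/-- The Weyl vector `δ`, whose (1-indexed) `i`-th coordinate is `(r+1-2i)/2`. -/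
def weylδ (r : ℕ) : Fin r → ℚ := fun j => ((r : ℚ) - 1 - 2 * ((j : ℕ) : ℚ)) / 2

/-- Membership in `V = {v : Fin r → ℚ | Σ_i v i = 0}`. -/
def memV {r : ℕ} (v : Fin r → ℚ) : Prop := ∑ i, v i = 0

/-- Membership in the root lattice `Q_r`. -/
def memQ {r : ℕ} (v : Fin r → ℚ) : Prop := memV v ∧ ∀ i, ∃ m : ℤ, v i = (m : ℚ)

/-- Membership in the weight lattice `P_r`. -/
def memP {r : ℕ} (v : Fin r → ℚ) : Prop := memV v ∧ ∀ i j, ∃ m : ℤ, v i - v j = (m : ℚ)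

/-- The first fundamental weight `Λ₁ = ε₁ - (1/r)(ε₁ + ⋯ + ε_r)`. -/
def Lam1 (r : ℕ) : Fin r → ℚ := fun j => (if (j : ℕ) = 0 then 1 else 0) - 1 / (r : ℚ)

/-- The simple roots, 0-indexed: `srootF i = ε_{i+1} - ε_{i+2}` in 1-indexed notation. -/
def srootF {r : ℕ} (i : Fin (r - 1)) : Fin r → ℚ :=
  fun j => (if (j : ℕ) = (i : ℕ) then 1 else 0) - (if (j : ℕ) = (i : ℕ) + 1 then 1 else 0)

/-- The highest root `θ = ε₁ - ε_r`. -/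
def hroot (r : ℕ) : Fin r → ℚ :=
  fun j => (if (j : ℕ) = 0 then 1 else 0) - (if (j : ℕ) = r - 1 then 1 else 0)

/-- The set `Π_{r,n}` of weights of `L_r(nΛ₁)`:
all `nΛ₁ - a₁α₁ - ⋯ - a_{r-1}α_{r-1}` with `n ≥ a₁ ≥ ⋯ ≥ a_{r-1} ≥ 0`. -/
def PiWts (r n : ℕ) : Set (Fin r → ℚ) :=
  {v | ∃ a : Fin (r - 1) → ℤ, (∀ i, 0 ≤ a i) ∧ (∀ i, a i ≤ (n : ℤ)) ∧
        (∀ i j, i ≤ j → a j ≤ a i) ∧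
        v = (n : ℚ) • Lam1 r - ∑ i, (a i : ℚ) • srootF i}

lemma Int.eq_or_eq_of_dvd_sub {n a b : ℤ} (ha₀ : 0 ≤ a) (ha : a ≤ n) (hb₀ : 0 ≤ b)
    (hb : b ≤ n) (h : n ∣ a - b) : a = b ∨ (a = 0 ∧ b = n) ∨ (a = n ∧ b = 0) := by
  by_cases hlt : |a - b| < n
  · exact Or.inl (sub_eq_zero.mp (Int.eq_zero_of_abs_lt_dvd h hlt))
  · rw [abs_lt] at hlt
    omega

lemma Equiv.Perm.eq_one_or_eq_swap {α : Type*} [DecidableEq α] {σ : Equiv.Perm α} {a b : α}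
    (h : ∀ j, σ j = j ∨ σ j = Equiv.swap a b j) : σ = 1 ∨ σ = Equiv.swap a b := by
  by_cases ha : σ a = a
  · refine Or.inl (Equiv.ext fun j => ?_)
    have := h j
    have := h b
    have : σ b = σ a → b = a := fun e => σ.injective e
    grind [Equiv.Perm.one_apply]
  · refine Or.inr (Equiv.ext fun j => ?_)
    have := h j
    have := h a
    have : σ j = σ a → j = a := fun e => σ.injective e
    grind

lemma Fin.eq_or_eq_swap_of_dvd_sub {r : ℕ} {a b i j : Fin r} (ha : (a : ℕ) = 0)
    (hb : (b : ℕ) = r - 1) (h : ((r : ℤ) - 1) ∣ (i : ℤ) - j) : j = i ∨ j = Equiv.swap a b i := by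
  have := i.isLt
  have := j.isLt
  rcases Int.eq_or_eq_of_dvd_sub (by omega) (by omega) (by omega) (by omega) h with
    hij | ⟨hi, hj⟩ | ⟨hi, hj⟩
  · exact Or.inl (Fin.ext (by omega))
  · have : i = a := Fin.ext (by omega)
    subst this
    exact Or.inr (by rw [Equiv.swap_apply_left]; exact Fin.ext (by omega))
  · have : i = b := Fin.ext (by omega)
    subst this
    exact Or.inr (by rw [Equiv.swap_apply_right]; exact Fin.ext (by omega))

lemma weylδ_sub_weylδ (r : ℕ) (i j : Fin r) :
    weylδ r i - weylδ r j = ((j : ℕ) : ℚ) - (i : ℕ) := by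
  simp only [weylδ]; ring

lemma pact_mul {r : ℕ} (u w : Equiv.Perm (Fin r)) (v : Fin r → ℚ) :
    pact (u * w) v = pact u (pact w v) := rfl

lemma pact_sub {r : ℕ} (w : Equiv.Perm (Fin r)) (v v' : Fin r → ℚ) :
    pact w v - pact w v' = pact w (v - v') := rfl

lemma pact_smul {r : ℕ} (w : Equiv.Perm (Fin r)) (c : ℚ) (v : Fin r → ℚ) :
    pact w (c • v) = c • pact w v := rfl

lemma memQ_pact {r : ℕ} {v : Fin r → ℚ} (hv : memQ v) (w : Equiv.Perm (Fin r)) :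
    memQ (pact w v) :=
  ⟨(Equiv.sum_comp w⁻¹ v).trans hv.1, fun _ => hv.2 _⟩

lemma memQ_neg {r : ℕ} {v : Fin r → ℚ} (hv : memQ v) : memQ (-v) := by
  refine ⟨?_, fun i => ?_⟩
  · simp only [memV, Pi.neg_apply, Finset.sum_neg_distrib, neg_eq_zero]
    exact hv.1
  · obtain ⟨m, hm⟩ := hv.2 i
    exact ⟨-m, by simp [hm]⟩

lemma memQ_hroot (r : ℕ) : memQ (hroot r) := by
  refine ⟨?_, fun i => ⟨(if (i : ℕ) = 0 then 1 else 0) - (if (i : ℕ) = r - 1 then 1 else 0), ?_⟩⟩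
  · simp only [memV, hroot, Finset.sum_sub_distrib]
    rw [Fin.sum_univ_eq_sum_range (fun j => if j = 0 then (1 : ℚ) else 0),
      Fin.sum_univ_eq_sum_range (fun j => if j = r - 1 then (1 : ℚ) else 0),
      Finset.sum_ite_eq', Finset.sum_ite_eq']
    cases r <;> simp
  · simp only [hroot]; push_cast; rfl

lemma pact_swap_weylδ_sub {r : ℕ} {a b : Fin r} (ha : (a : ℕ) = 0) (hb : (b : ℕ) = r - 1) :
    pact (Equiv.swap a b) (weylδ r) - weylδ r = (-((r : ℚ) - 1)) • hroot r := by
  funext j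
  simp only [Pi.sub_apply, Pi.smul_apply, smul_eq_mul, pact, Equiv.swap_inv, weylδ_sub_weylδ,
    hroot]
  obtain ⟨n, rfl⟩ : ∃ n, r = n + 1 := ⟨r - 1, by omega⟩
  simp only [Nat.add_sub_cancel, Nat.cast_add, Nat.cast_one, add_sub_cancel_right] at hb ⊢
  by_cases hja : j = a
  · subst hja
    rw [Equiv.swap_apply_left, ha, hb]
    rcases eq_or_ne n 0 with rfl | hn
    · simp
    · simp [hn.symm]
  by_cases hjb : j = b
  · subst hjb
    rw [Equiv.swap_apply_right, ha, hb]
    have hn : n ≠ 0 := fun h => hja (Fin.ext (by omega))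
    simp [hn]
  rw [Equiv.swap_apply_of_ne_of_ne hja hjb, if_neg fun h => hja (Fin.ext (by omega)),
    if_neg fun h => hjb (Fin.ext (by omega))]
  ring

lemma pact_mul_swap_weylδ_sub {r : ℕ} {a b : Fin r} (ha : (a : ℕ) = 0) (hb : (b : ℕ) = r - 1)
    (w : Equiv.Perm (Fin r)) :
    pact (w * Equiv.swap a b) (weylδ r) - pact w (weylδ r) =
      (-((r : ℚ) - 1)) • pact w (hroot r) := by
  rw [pact_mul, pact_sub, pact_swap_weylδ_sub ha hb, pact_smul]

lemma eq_or_eq_mul_swap_of_pact_weylδ_sub {r : ℕ} {a b : Fin r} (ha : (a : ℕ) = 0)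
    (hb : (b : ℕ) = r - 1) {u w : Equiv.Perm (Fin r)} {β : Fin r → ℚ}
    (hβ : ∀ i, ∃ m : ℤ, β i = m) (h : pact u (weylδ r) - pact w (weylδ r) = ((r : ℚ) - 1) • β) :
    u = w ∨ u = w * Equiv.swap a b := by
  have hσ : ∀ j, (u⁻¹ * w) j = j ∨ (u⁻¹ * w) j = Equiv.swap a b j := fun j => by
    obtain ⟨m, hm⟩ := hβ (w j)
    have hj := congrFun h (w j)
    simp only [Pi.sub_apply, Pi.smul_apply, smul_eq_mul, pact, Equiv.Perm.coe_inv,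
      Equiv.symm_apply_apply, weylδ_sub_weylδ, hm] at hj
    exact Fin.eq_or_eq_swap_of_dvd_sub ha hb ⟨m, by rw [Equiv.Perm.mul_apply]; exact_mod_cast hj⟩
  rcases Equiv.Perm.eq_one_or_eq_swap hσ with h1 | h1
  · exact Or.inl (inv_mul_eq_one.mp h1)
  · right
    rw [inv_mul_eq_iff_eq_mul.mp h1, mul_assoc, Equiv.swap_mul_self, mul_one]

/-- `u•δ - w•δ ∈ (r-1)Q_r` iff `u = w` or `u = w∘τ` with `τ = (1,r)`;
and in the latter case `u•δ - w•δ = -(r-1)·(w•θ)` with `θ = ε₁ - ε_r` the highest root. -/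
theorem stmt9 (r : ℕ) (hr : 2 ≤ r) (u w : Equiv.Perm (Fin r)) :
    ((∃ β, memQ β ∧ pact u (weylδ r) - pact w (weylδ r) = ((r : ℚ) - 1) • β) ↔
      (u = w ∨ u = w * Equiv.swap (⟨0, by omega⟩ : Fin r) (⟨r - 1, by omega⟩ : Fin r))) ∧
    (u = w * Equiv.swap (⟨0, by omega⟩ : Fin r) (⟨r - 1, by omega⟩ : Fin r) →
      pact u (weylδ r) - pact w (weylδ r) = (-((r : ℚ) - 1)) • pact w (hroot r)) := by
  have ha : ((⟨0, by omega⟩ : Fin r) : ℕ) = 0 := rfl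
  have hb : ((⟨r - 1, by omega⟩ : Fin r) : ℕ) = r - 1 := rfl
  have hswap := pact_mul_swap_weylδ_sub ha hb w
  refine ⟨⟨fun ⟨β, hβ, h⟩ => eq_or_eq_mul_swap_of_pact_weylδ_sub ha hb hβ.2 h, ?_⟩,
    fun h => h ▸ hswap⟩
  rintro (rfl | rfl)
  · exact ⟨0, ⟨by simp [memV], fun _ => ⟨0, by simp⟩⟩, by simp⟩
  · exact ⟨-pact w (hroot r), memQ_neg (memQ_pact (memQ_hroot r) w),
      by rw [hswap, smul_neg, neg_smul]⟩
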